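/- arXiv:2505.22824 — 2 statements merged into one kernel-verified Lean document; each statement's English description precedes it below -/
import Mathlib

section
/- Let n ≥ 2. Let q, p : ℝ → (Fin n → ℝ) and ε : ℝ → (Fin (n−1) → ℝ) be differentiable, with q_i'(t) = p_i(t) for all i and t. Define the tridiagonal matrices L(t), A(t) ∈ Matrix (Fin n) (Fin n) ℝ by: L(t)_{ii} = p_i(t), L(t)_{i,i+1} = L(t)_{i+1,i} = exp(q_i(t) − q_{i+1}(t) + ε_i(t)) for 1 ≤ i ≤ n−1, all other entries zero; and A(t)_{i,i+1} = exp(q_i(t) − q_{i+1}(t) + ε_i(t)), A(t)_{i+1,i} = −exp(q_i(t) − q_{i+1}(t) + ε_i(t)) for 1 ≤ i ≤ n−1, all other entries zero. Then the (1,2)-entry of the zero-curvature equation holds, i.e. d/dt [L(t)_{1,2}] = (A(t)·L(t) − L(t)·A(t))_{1,2} for all t, if and only if ε₁'(t) = 2(p₂(t) − p₁(t)) for all t. -/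
open scoped Matrix

/-- The observation-constrained Toda Lax matrix `L(t)`: diagonal entries `p_i(t)`,
off-diagonal entries `L_{i,i+1} = L_{i+1,i} = exp(q_i − q_{i+1} + ε_i)`, all others zero. -/
noncomputable def todaL (n : ℕ) (q p : ℝ → Fin n → ℝ) (ε : ℝ → Fin (n - 1) → ℝ)
    (t : ℝ) : Matrix (Fin n) (Fin n) ℝ :=
  Matrix.of fun i j =>
    if i = j then p t i
    else if h : (i : ℕ) + 1 = (j : ℕ) then
      Real.exp (q t i - q t j + ε t ⟨i, by have := j.isLt; omega⟩)
    else if h' : (j : ℕ) + 1 = (i : ℕ) then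
      Real.exp (q t j - q t i + ε t ⟨j, by have := i.isLt; omega⟩)
    else 0

/-- The observation-constrained Toda `A(t)` matrix: `A_{i,i+1} = exp(q_i − q_{i+1} + ε_i)`,
`A_{i+1,i} = −exp(q_i − q_{i+1} + ε_i)`, all others (including the diagonal) zero. -/
noncomputable def todaA (n : ℕ) (q p : ℝ → Fin n → ℝ) (ε : ℝ → Fin (n - 1) → ℝ)
    (t : ℝ) : Matrix (Fin n) (Fin n) ℝ :=
  Matrix.of fun i j =>
    if h : (i : ℕ) + 1 = (j : ℕ) then
      Real.exp (q t i - q t j + ε t ⟨i, by have := j.isLt; omega⟩)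
    else if h' : (j : ℕ) + 1 = (i : ℕ) then
      -Real.exp (q t j - q t i + ε t ⟨j, by have := i.isLt; omega⟩)
    else 0

/-- The `(1,2)`-entry of the zero-curvature equation `dL/dt = [A, L]` for the
observation-constrained Toda lattice holds for all `t` if and only if the observation error
evolves according to `ε₁' = 2(p₂ − p₁)`. -/
theorem toda_zero_curvature_entry_iff (n : ℕ) (hn : 2 ≤ n)
    (q p : ℝ → Fin n → ℝ) (ε : ℝ → Fin (n - 1) → ℝ)
    (hq : ∀ i, Differentiable ℝ fun t => q t i)
    (hp : ∀ i, Differentiable ℝ fun t => p t i)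
    (hε : ∀ a, Differentiable ℝ fun t => ε t a)
    (hqp : ∀ i t, HasDerivAt (fun s => q s i) (p t i) t) :
    (∀ t : ℝ, deriv (fun s => todaL n q p ε s ⟨0, by omega⟩ ⟨1, by omega⟩) t
        = (todaA n q p ε t * todaL n q p ε t - todaL n q p ε t * todaA n q p ε t)
            ⟨0, by omega⟩ ⟨1, by omega⟩)
      ↔ (∀ t : ℝ, deriv (fun s => ε s ⟨0, by omega⟩) t
            = 2 * (p t ⟨1, by omega⟩ - p t ⟨0, by omega⟩)) := by

  have hn1 : (1:ℕ) < n := hn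
  set i0 : Fin n := ⟨0, by omega⟩ with hi0
  set i1 : Fin n := ⟨1, by omega⟩ with hi1
  set a0 : Fin (n-1) := ⟨0, by omega⟩ with ha0
  have hne : i0 ≠ i1 := by simp [hi0, hi1, Fin.ext_iff]
  -- the L(0,1) entry as a function of s
  have hLfun : (fun s => todaL n q p ε s i0 i1)
      = fun s => Real.exp (q s i0 - q s i1 + ε s a0) := by
    funext s
    simp only [todaL, Matrix.of_apply, if_neg hne]
    rw [dif_pos (by simp [hi0, hi1])]
  -- derivative of the left-hand side
  have hderiv : ∀ t, deriv (fun s => todaL n q p ε s i0 i1) t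
      = Real.exp (q t i0 - q t i1 + ε t a0)
        * (p t i0 - p t i1 + deriv (fun s => ε s a0) t) := by
    intro t
    rw [hLfun]
    have hε' : HasDerivAt (fun s => ε s a0) (deriv (fun s => ε s a0) t) t :=
      ((hε a0) t).hasDerivAt
    have h1 : HasDerivAt (fun s => q s i0 - q s i1 + ε s a0)
        (p t i0 - p t i1 + deriv (fun s => ε s a0) t) t :=
      ((hqp i0 t).sub (hqp i1 t)).add hε'
    exact h1.exp.deriv
  -- entries
  have hAval : ∀ t, todaA n q p ε t i0 i1 = Real.exp (q t i0 - q t i1 + ε t a0) := by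
    intro t
    simp only [todaA, Matrix.of_apply]
    rw [dif_pos (by simp [hi0, hi1])]
  have hL00 : ∀ t, todaL n q p ε t i0 i0 = p t i0 := by
    intro t; simp [todaL]
  have hL11 : ∀ t, todaL n q p ε t i1 i1 = p t i1 := by
    intro t; simp [todaL]
  have hA11 : ∀ t, todaA n q p ε t i1 i1 = 0 := by
    intro t
    simp only [todaA, Matrix.of_apply]
    rw [dif_neg (by simp [hi1]), dif_neg (by simp [hi1])]
  have hL01 : ∀ t, todaL n q p ε t i0 i1 = Real.exp (q t i0 - q t i1 + ε t a0) := by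
    intro t
    simp only [todaL, Matrix.of_apply, if_neg hne]
    rw [dif_pos (by simp [hi0, hi1])]
  -- the commutator entry
  have hRHS : ∀ t,
      (todaA n q p ε t * todaL n q p ε t - todaL n q p ε t * todaA n q p ε t) i0 i1
      = Real.exp (q t i0 - q t i1 + ε t a0) * (p t i1 - p t i0) := by
    intro t
    have hAL : (todaA n q p ε t * todaL n q p ε t) i0 i1
        = Real.exp (q t i0 - q t i1 + ε t a0) * p t i1 := by
      rw [Matrix.mul_apply]
      rw [Finset.sum_eq_single i1]
      · rw [hAval, hL11]
      · intro b _ hb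
        have hb' : (b : ℕ) ≠ 1 := by
          intro h; exact hb (Fin.ext (by simp [hi1, h]))
        have : todaA n q p ε t i0 b = 0 := by
          simp only [todaA, Matrix.of_apply]
          rw [dif_neg (by simp [hi0] <;> omega), dif_neg (by simp [hi0] <;> omega)]
        rw [this, zero_mul]
      · intro h; exact absurd (Finset.mem_univ i1) h
    have hLA : (todaL n q p ε t * todaA n q p ε t) i0 i1
        = p t i0 * Real.exp (q t i0 - q t i1 + ε t a0) := by
      rw [Matrix.mul_apply]
      have hzero : ∀ b : Fin n, b ∉ ({i0, i1} : Finset (Fin n)) →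
          todaL n q p ε t i0 b * todaA n q p ε t b i1 = 0 := by
        intro b hb
        simp only [Finset.mem_insert, Finset.mem_singleton] at hb
        push_neg at hb
        have hb0 : (b : ℕ) ≠ 0 := by
          intro h; exact hb.1 (Fin.ext (by simp [hi0, h]))
        have hb1 : (b : ℕ) ≠ 1 := by
          intro h; exact hb.2 (Fin.ext (by simp [hi1, h]))
        have hLz : todaL n q p ε t i0 b = 0 := by
          simp only [todaL, Matrix.of_apply]
          rw [if_neg (by intro h; exact hb0 (by simp [← h, hi0])),
            dif_neg (by simp [hi0] <;> omega), dif_neg (by simp [hi0] <;> omega)]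
        rw [hLz, zero_mul]
      rw [← Finset.sum_subset (Finset.subset_univ ({i0, i1} : Finset (Fin n)))
        (fun b _ hb => hzero b hb)]
      rw [Finset.sum_pair hne, hL00, hL01, hA11, hAval, mul_zero, add_zero]
    rw [Matrix.sub_apply, hAL, hLA]
    ring
  constructor
  · intro h t
    have ht := h t
    rw [hderiv, hRHS] at ht
    have hexp : Real.exp (q t i0 - q t i1 + ε t a0) ≠ 0 := Real.exp_ne_zero _
    have := mul_left_cancel₀ hexp ht
    linarith
  · intro h t
    rw [hderiv, hRHS, h t]
    ring
end

section
/- Let (M, d) be a proper metric space (every closed ball is compact), x₀ ∈ M, k a natural number, and C > 0, β > 0. Let δ : M → ℝ be continuous with 0 < δ(x) ≤ C·(1 + d(x, x₀))^{−β} for all x ∈ M. Define the total space E = {(x, ξ) ∈ M × ℝ^k : ‖ξ‖ ≤ δ(x)}. Then for every ε > 0 the set {(x, ξ) ∈ E : ‖ξ‖ ≥ ε} is compact. -/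
/-- Asymptotic-decay properness (condition (C4b)): over a proper metric space `M`, if the
uncertainty function satisfies `0 < δ x ≤ C·(1 + d(x, x₀))^(−β)` with `C, β > 0`, then for
every `ε > 0` the tail set `{(x, ξ) ∈ E : ‖ξ‖ ≥ ε}` of the observation bundle
`E = {(x, ξ) : ‖ξ‖ ≤ δ x}` is compact. -/
theorem observation_bundle_tail_compact {M : Type*} [MetricSpace M] [ProperSpace M]
    (x₀ : M) (k : ℕ) (C β : ℝ) (hC : 0 < C) (hβ : 0 < β)
    (δ : M → ℝ) (hδc : Continuous δ)
    (hδpos : ∀ x, 0 < δ x)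
    (hδle : ∀ x, δ x ≤ C * (1 + dist x x₀) ^ (-β)) :
    ∀ ε : ℝ, 0 < ε →
      IsCompact {p : M × EuclideanSpace ℝ (Fin k) | ‖p.2‖ ≤ δ p.1 ∧ ε ≤ ‖p.2‖} := by
  intro ε hε
  set R : ℝ := (C / ε) ^ (1 / β) with hR
  have hsub : {p : M × EuclideanSpace ℝ (Fin k) | ‖p.2‖ ≤ δ p.1 ∧ ε ≤ ‖p.2‖} ⊆
      (Metric.closedBall x₀ R) ×ˢ (Metric.closedBall 0 C) := by
    rintro ⟨x, ξ⟩ ⟨h1, h2⟩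
    have hd0 : (0:ℝ) ≤ dist x x₀ := dist_nonneg
    have h1d : (1:ℝ) ≤ 1 + dist x x₀ := by linarith
    have h1dpos : (0:ℝ) < 1 + dist x x₀ := by linarith
    have hεle : ε ≤ C * (1 + dist x x₀) ^ (-β) := le_trans (le_trans h2 h1) (hδle x)
    have hrpos : (0:ℝ) < (1 + dist x x₀) ^ (-β) := Real.rpow_pos_of_pos h1dpos _
    constructor
    · -- dist x x₀ ≤ R
      have hpowpos : (0:ℝ) < (1 + dist x x₀) ^ β := Real.rpow_pos_of_pos h1dpos _
      have hpow : (1 + dist x x₀) ^ β ≤ C / ε := by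
        rw [le_div_iff₀ hε]
        have hinv : (1 + dist x x₀) ^ (-β) = ((1 + dist x x₀) ^ β)⁻¹ :=
          Real.rpow_neg h1dpos.le β
        rw [hinv] at hεle
        have := mul_le_mul_of_nonneg_right hεle hpowpos.le
        rwa [mul_assoc, inv_mul_cancel₀ hpowpos.ne', mul_one, mul_comm ε] at this
      have : ((1 + dist x x₀) ^ β) ^ (1/β) ≤ (C / ε) ^ (1/β) :=
        Real.rpow_le_rpow (by positivity) hpow (by positivity)
      rw [← Real.rpow_mul h1dpos.le, mul_one_div, div_self hβ.ne', Real.rpow_one] at this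
      simp only [Metric.mem_closedBall]
      linarith
    · -- ‖ξ‖ ≤ C
      have hle1 : (1 + dist x x₀) ^ (-β) ≤ 1 :=
        Real.rpow_le_one_of_one_le_of_nonpos h1d (by linarith)
      have : δ x ≤ C := le_trans (hδle x) (by nlinarith)
      simp only [Metric.mem_closedBall, dist_zero_right]
      linarith
  have hclosed : IsClosed {p : M × EuclideanSpace ℝ (Fin k) | ‖p.2‖ ≤ δ p.1 ∧ ε ≤ ‖p.2‖} := by
    apply IsClosed.inter
    · exact isClosed_le (continuous_norm.comp continuous_snd) (hδc.comp continuous_fst)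
    · exact isClosed_le continuous_const (continuous_norm.comp continuous_snd)
  exact ((isCompact_closedBall x₀ R).prod (isCompact_closedBall 0 C)).of_isClosed_subset
    hclosed hsub
end
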